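/- arXiv:2303.15905 — 3 statements merged into one kernel-verified Lean document; each statement's English description precedes it below -/
import Mathlib

section
/- Let m, l be natural numbers and consider the ℂ*-action on ℂ^{m+1} × ℂ^{l+1} given by t·(u,w) = (t•u, t⁻¹•w). For a point (u,w) ∈ ℂ^{m+1} × ℂ^{l+1}, the limit of t·(u,w) as t → 0 (t ranging over nonzero complex numbers) exists if and only if w = 0; and when w = 0 this limit equals the origin (0,0). -/
open Filter Topology

section ScalarLimits

variable {𝕜 E : Type*} [NontriviallyNormedField 𝕜] [AddCommGroup E] [Module 𝕜 E]
  [TopologicalSpace E] [ContinuousSMul 𝕜 E]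

theorem tendsto_smul_nhdsNE_zero (u : E) :
    Tendsto (fun t : 𝕜 => t • u) (𝓝[≠] 0) (𝓝 0) := by
  have h : Tendsto (fun t : 𝕜 => t • u) (𝓝 0) (𝓝 ((0 : 𝕜) • u)) :=
    (continuous_id.smul continuous_const).tendsto 0
  rw [zero_smul] at h
  exact h.mono_left nhdsWithin_le_nhds

/-- `w = t • (t⁻¹ • w)` for `t ≠ 0`, and the right-hand side tends to `0 • p = 0`. -/
theorem eq_zero_of_tendsto_inv_smul [T2Space E] {w p : E}
    (h : Tendsto (fun t : 𝕜 => t⁻¹ • w) (𝓝[≠] 0) (𝓝 p)) : w = 0 := by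
  have hid : Tendsto (fun t : 𝕜 => t) (𝓝[≠] 0) (𝓝 0) :=
    tendsto_id.mono_left nhdsWithin_le_nhds
  have hprod : Tendsto (fun t : 𝕜 => t • t⁻¹ • w) (𝓝[≠] 0) (𝓝 ((0 : 𝕜) • p)) :=
    hid.smul h
  have hcancel : (fun t : 𝕜 => t • t⁻¹ • w) =ᶠ[𝓝[≠] 0] fun _ => w := by
    filter_upwards [self_mem_nhdsWithin] with t ht
    exact smul_inv_smul₀ ht w
  rw [zero_smul] at hprod
  exact tendsto_nhds_unique (tendsto_const_nhds.congr' hcancel.symm) hprod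

end ScalarLimits

/-- For the ℂ*-action `t · (u, w) = (t • u, t⁻¹ • w)` on `ℂ^{m+1} × ℂ^{l+1}`, the limit
as `t → 0` exists iff `w = 0`, and in that case the limit is the origin. -/
theorem limit_exists_at_zero_iff_snd_eq_zero (m l : ℕ)
    (u : Fin (m + 1) → ℂ) (w : Fin (l + 1) → ℂ) :
    ((∃ p : (Fin (m + 1) → ℂ) × (Fin (l + 1) → ℂ),
        Tendsto (fun t : ℂ => (t • u, t⁻¹ • w)) (𝓝[≠] 0) (𝓝 p)) ↔ w = 0) ∧
    (w = 0 →
      Tendsto (fun t : ℂ => (t • u, t⁻¹ • w)) (𝓝[≠] 0)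
        (𝓝 ((0, 0) : (Fin (m + 1) → ℂ) × (Fin (l + 1) → ℂ)))) := by
  have hlim : w = 0 → Tendsto (fun t : ℂ => (t • u, t⁻¹ • w)) (𝓝[≠] 0)
      (𝓝 ((0, 0) : (Fin (m + 1) → ℂ) × (Fin (l + 1) → ℂ))) := by
    rintro rfl
    simpa only [smul_zero] using (tendsto_smul_nhdsNE_zero u).prodMk_nhds tendsto_const_nhds
  refine ⟨⟨fun ⟨p, hp⟩ => ?_, fun hw => ⟨_, hlim hw⟩⟩, hlim⟩
  exact eq_zero_of_tendsto_inv_smul (p := p.2) ((continuous_snd.tendsto p).comp hp)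
end

section
/- Let m, l be natural numbers and let R = MvPolynomial (Fin (m+1) ⊕ Fin (l+1)) ℂ, with variables y_i = X (Sum.inl i) and x_j = X (Sum.inr j). For each nonzero t ∈ ℂ let σ_t : R → R be the ℂ-algebra endomorphism determined by y_i ↦ t • y_i and x_j ↦ t⁻¹ • x_j. Then the set of polynomials p ∈ R satisfying σ_t p = p for all nonzero t ∈ ℂ equals the ℂ-subalgebra generated by the products {y_i * x_j : i ∈ Fin (m+1), j ∈ Fin (l+1)}. -/
/-!
`oppositeScaling t`, the paper's `σ_t`, multiplies the monomial with exponent `d` by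
`t ^ a * t⁻¹ ^ b`, where `a` and `b` are the total degrees of `d` in the `y`- and in the
`x`-variables. Hence (in characteristic zero already `σ_2` detects this) a polynomial is invariant
iff all its monomials have `a = b`, and such a monomial is, up to a scalar, a product of `a` pairs
`y_i * x_j`, obtained by matching its `y`-factors with its `x`-factors one by one.
-/

open MvPolynomial

namespace Submonoid

variable {M : Type*} [CommMonoid M] (S : Submonoid M)

theorem multiset_prod_mul_prod_mem {s t : Multiset M} (hcard : Multiset.card s = Multiset.card t)
    (h : ∀ x ∈ s, ∀ y ∈ t, x * y ∈ S) : s.prod * t.prod ∈ S := by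
  induction s using Multiset.induction_on generalizing t with
  | empty =>
    obtain rfl : t = 0 := Multiset.card_eq_zero.mp (by simp_all)
    simp
  | cons x s ih =>
    obtain ⟨y, hy⟩ : ∃ y, y ∈ t :=
      Multiset.card_pos_iff_exists_mem.mp (by simp [← hcard])
    obtain ⟨t, rfl⟩ := Multiset.exists_cons_of_mem hy
    have hxy : x * y ∈ S := h x (Multiset.mem_cons_self x s) y hy
    have hst : s.prod * t.prod ∈ S :=
      ih (by simpa using hcard) fun x' hx' y' hy' =>
        h x' (Multiset.mem_cons_of_mem hx') y' (Multiset.mem_cons_of_mem hy')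
    simpa only [Multiset.prod_cons, mul_mul_mul_comm] using S.mul_mem hxy hst

theorem prod_pow_mul_prod_pow_mem {ι κ : Type*} [Fintype ι] [Fintype κ] {f : ι → M} {g : κ → M}
    (h : ∀ i j, f i * g j ∈ S) (a : ι → ℕ) (b : κ → ℕ) (hab : ∑ i, a i = ∑ j, b j) :
    (∏ i, f i ^ a i) * ∏ j, g j ^ b j ∈ S := by
  have hf : ∏ i, f i ^ a i = (∑ i, a i • {f i} : Multiset M).prod := by
    simp [Multiset.prod_sum, Multiset.prod_nsmul]
  have hg : ∏ j, g j ^ b j = (∑ j, b j • {g j} : Multiset M).prod := by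
    simp [Multiset.prod_sum, Multiset.prod_nsmul]
  rw [hf, hg]
  refine S.multiset_prod_mul_prod_mem (by simpa [Multiset.card_sum] using hab) ?_
  simp only [Multiset.mem_sum, Multiset.mem_nsmul, Multiset.mem_singleton]
  rintro _ ⟨i, -, -, rfl⟩ _ ⟨j, -, -, rfl⟩
  exact h i j

end Submonoid

namespace MvPolynomial

variable {R σ τ : Type*} [CommSemiring R]

theorem aeval_smul_X_monomial (g : σ → R) (d : σ →₀ ℕ) (c : R) :
    aeval (fun s => g s • X s) (monomial d c) = (d.prod fun s e => g s ^ e) • monomial d c := by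
  rw [aeval_monomial, monomial_eq]
  simp only [Algebra.smul_def, algebraMap_eq, map_finsuppProd, map_pow, mul_pow, Finsupp.prod_mul]
  ring

theorem coeff_aeval_smul_X (g : σ → R) (d : σ →₀ ℕ) (p : MvPolynomial σ R) :
    coeff d (aeval (fun s => g s • X s) p) = (d.prod fun s e => g s ^ e) * coeff d p := by
  classical
  induction p using MvPolynomial.induction_on' with
  | monomial e c =>
    rw [aeval_smul_X_monomial, coeff_smul, coeff_monomial, smul_eq_mul]
    split_ifs with hed
    · rw [hed]
    · simp
  | add p q hp hq => simp only [map_add, coeff_add, hp, hq, mul_add]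

variable (R σ τ) in
def segreGenerators : Set (MvPolynomial (σ ⊕ τ) R) :=
  {q | ∃ i j, q = X (Sum.inl i) * X (Sum.inr j)}

theorem monomial_mem_adjoin_segreGenerators [Fintype σ] [Fintype τ] (d : σ ⊕ τ →₀ ℕ) (c : R)
    (hd : ∑ i, d (Sum.inl i) = ∑ j, d (Sum.inr j)) :
    monomial d c ∈ Algebra.adjoin R (segreGenerators R σ τ) := by
  set A := Algebra.adjoin R (segreGenerators R σ τ)
  have hgen (i : σ) (j : τ) : X (Sum.inl i) * X (Sum.inr j) ∈ A.toSubmonoid :=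
    Algebra.subset_adjoin ⟨i, j, rfl⟩
  rw [monomial_eq, Finsupp.prod_pow, Fintype.prod_sum_type]
  exact A.mul_mem (A.algebraMap_mem c) (A.toSubmonoid.prod_pow_mul_prod_pow_mem hgen _ _ hd)

section Scaling

variable {K : Type*} [Field K]

noncomputable def oppositeScaling (t : K) : MvPolynomial (σ ⊕ τ) K →ₐ[K] MvPolynomial (σ ⊕ τ) K :=
  aeval (Sum.elim (fun i => t • X (Sum.inl i)) (fun j => t⁻¹ • X (Sum.inr j)))

theorem oppositeScaling_eq_aeval_smul_X (t : K) :
    (oppositeScaling t : MvPolynomial (σ ⊕ τ) K →ₐ[K] _) =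
      aeval fun s => Sum.elim (fun _ => t) (fun _ => t⁻¹) s • X s := by
  unfold oppositeScaling
  congr 1
  funext s
  cases s <;> rfl

theorem coeff_oppositeScaling [Fintype σ] [Fintype τ] (t : K) (d : σ ⊕ τ →₀ ℕ)
    (p : MvPolynomial (σ ⊕ τ) K) :
    coeff d (oppositeScaling t p) =
      ((t ^ ∑ i, d (Sum.inl i)) * t⁻¹ ^ ∑ j, d (Sum.inr j)) * coeff d p := by
  rw [oppositeScaling_eq_aeval_smul_X, coeff_aeval_smul_X, Finsupp.prod_pow, Fintype.prod_sum_type]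
  simp only [Sum.elim_inl, Sum.elim_inr, Finset.prod_pow_eq_pow_sum]

theorem oppositeScaling_X_inl_mul_X_inr {t : K} (ht : t ≠ 0) (i : σ) (j : τ) :
    oppositeScaling t (X (Sum.inl i) * X (Sum.inr j)) = X (Sum.inl i) * X (Sum.inr j) := by
  rw [oppositeScaling, map_mul, aeval_X, aeval_X, Sum.elim_inl, Sum.elim_inr, smul_mul_smul_comm,
    mul_inv_cancel₀ ht, one_smul]

theorem adjoin_segreGenerators_le_equalizer {t : K} (ht : t ≠ 0) :
    Algebra.adjoin K (segreGenerators K σ τ) ≤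
      AlgHom.equalizer (oppositeScaling t) (AlgHom.id K _) :=
  Algebra.adjoin_le <| by
    rintro _ ⟨i, j, rfl⟩
    exact oppositeScaling_X_inl_mul_X_inr ht i j

theorem sum_inl_eq_sum_inr_of_oppositeScaling_two [CharZero K] [Fintype σ] [Fintype τ]
    {p : MvPolynomial (σ ⊕ τ) K} (hp : oppositeScaling 2 p = p) {d : σ ⊕ τ →₀ ℕ}
    (hd : d ∈ p.support) : ∑ i, d (Sum.inl i) = ∑ j, d (Sum.inr j) := by
  have hcoeff := congrArg (coeff d) hp
  rw [coeff_oppositeScaling] at hcoeff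
  have hweight : ((2 : K) ^ ∑ i, d (Sum.inl i)) * 2⁻¹ ^ ∑ j, d (Sum.inr j) = 1 :=
    mul_right_cancel₀ (mem_support_iff.mp hd) (by rw [hcoeff, one_mul])
  rw [inv_pow, mul_inv_eq_one₀ (pow_ne_zero _ two_ne_zero)] at hweight
  exact Nat.pow_right_injective le_rfl (by exact_mod_cast hweight)

theorem setOf_forall_oppositeScaling_eq_self [CharZero K] [Fintype σ] [Fintype τ] :
    {p : MvPolynomial (σ ⊕ τ) K | ∀ t : K, t ≠ 0 → oppositeScaling t p = p} =
      ↑(Algebra.adjoin K (segreGenerators K σ τ)) := by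
  ext p
  constructor
  · intro hp
    rw [p.as_sum]
    exact Subalgebra.sum_mem _ fun d hd => monomial_mem_adjoin_segreGenerators d _
      (sum_inl_eq_sum_inr_of_oppositeScaling_two (hp 2 two_ne_zero) hd)
  · intro hp t ht
    exact adjoin_segreGenerators_le_equalizer ht hp

end Scaling

end MvPolynomial

/-- The invariant ring of the ℂ*-action `y_i ↦ t • y_i`, `x_j ↦ t⁻¹ • x_j` on
`ℂ[y_0, …, y_m, x_0, …, x_l]` is the subalgebra generated by the products `y_i * x_j`. -/
theorem invariant_ring_eq_adjoin_products (m l : ℕ) :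
    {p : MvPolynomial (Fin (m + 1) ⊕ Fin (l + 1)) ℂ |
      ∀ t : ℂ, t ≠ 0 →
        aeval (Sum.elim (fun i : Fin (m + 1) => t • (X (Sum.inl i) :
            MvPolynomial (Fin (m + 1) ⊕ Fin (l + 1)) ℂ))
          (fun j : Fin (l + 1) => t⁻¹ • X (Sum.inr j))) p = p} =
    ↑(Algebra.adjoin ℂ
      {q : MvPolynomial (Fin (m + 1) ⊕ Fin (l + 1)) ℂ |
        ∃ (i : Fin (m + 1)) (j : Fin (l + 1)),
          q = X (Sum.inl i) * X (Sum.inr j)}) :=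
  MvPolynomial.setOf_forall_oppositeScaling_eq_self
end

section
/- Let m, l be natural numbers and let u ∈ ℂ^{m+1}, w ∈ ℂ^{l+1} with u ≠ 0 and w ≠ 0. Then the orbit {(t•u, t⁻¹•w) : t ∈ ℂ, t ≠ 0} is a closed subset of ℂ^{m+1} × ℂ^{l+1}. -/
/-!
Pick continuous linear functionals `φ`, `ψ` with `φ u = 1` and `ψ w = 1` (for `u i ≠ 0`, take
`φ = (u i)⁻¹ • proj i`). On the orbit the parameter is recovered as `t = φ a` and `t⁻¹ = ψ b`, so
the orbit is cut out by the closed conditions `a = φ a • u`, `b = ψ b • w`, `φ a * ψ b = 1`.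
-/

section

variable {𝕜 E F : Type*} [Field 𝕜] [AddCommGroup E] [Module 𝕜 E] [AddCommGroup F] [Module 𝕜 F]

theorem setOf_exists_smul_inv_smul_eq {u : E} {w : F} (φ : E →ₗ[𝕜] 𝕜) (ψ : F →ₗ[𝕜] 𝕜)
    (hφ : φ u = 1) (hψ : ψ w = 1) :
    {x : E × F | ∃ t : 𝕜, t ≠ 0 ∧ x = (t • u, t⁻¹ • w)} =
      {x | x.1 = φ x.1 • u ∧ x.2 = ψ x.2 • w ∧ φ x.1 * ψ x.2 = 1} := by
  ext x
  constructor
  · rintro ⟨t, ht, rfl⟩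
    simp [hφ, hψ, ht]
  · rintro ⟨ha, hb, hprod⟩
    refine ⟨φ x.1, left_ne_zero_of_mul_eq_one hprod, Prod.ext ha ?_⟩
    rwa [eq_inv_of_mul_eq_one_right hprod] at hb

variable [TopologicalSpace 𝕜] [ContinuousMul 𝕜] [T2Space 𝕜]
  [TopologicalSpace E] [T2Space E] [ContinuousSMul 𝕜 E]
  [TopologicalSpace F] [T2Space F] [ContinuousSMul 𝕜 F]

theorem isClosed_setOf_exists_smul_inv_smul {u : E} {w : F} (φ : E →L[𝕜] 𝕜) (ψ : F →L[𝕜] 𝕜)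
    (hφ : φ u = 1) (hψ : ψ w = 1) :
    IsClosed {x : E × F | ∃ t : 𝕜, t ≠ 0 ∧ x = (t • u, t⁻¹ • w)} := by
  rw [setOf_exists_smul_inv_smul_eq φ.toLinearMap ψ.toLinearMap hφ hψ]
  refine .inter (isClosed_eq (by fun_prop) (by fun_prop)) <|
    .inter (isClosed_eq (by fun_prop) (by fun_prop)) (isClosed_eq (by fun_prop) (by fun_prop))

end

theorem ContinuousLinearMap.exists_apply_eq_one_of_ne_zero {ι : Type*} {𝕜 : Type*} [Field 𝕜]
    [TopologicalSpace 𝕜] [ContinuousMul 𝕜] {v : ι → 𝕜} (hv : v ≠ 0) :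
    ∃ φ : (ι → 𝕜) →L[𝕜] 𝕜, φ v = 1 := by
  obtain ⟨i, hi⟩ := Function.ne_iff.mp hv
  exact ⟨(v i)⁻¹ • ContinuousLinearMap.proj i, inv_mul_cancel₀ hi⟩

/-- If `u ≠ 0` and `w ≠ 0`, the orbit `{(t • u, t⁻¹ • w) : t ≠ 0}` of the ℂ*-action on
`ℂ^{m+1} × ℂ^{l+1}` is closed. -/
theorem orbit_isClosed_of_ne_zero (m l : ℕ)
    (u : Fin (m + 1) → ℂ) (w : Fin (l + 1) → ℂ) (hu : u ≠ 0) (hw : w ≠ 0) :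
    IsClosed {x : (Fin (m + 1) → ℂ) × (Fin (l + 1) → ℂ) |
      ∃ t : ℂ, t ≠ 0 ∧ x = (t • u, t⁻¹ • w)} := by
  obtain ⟨φ, hφ⟩ := ContinuousLinearMap.exists_apply_eq_one_of_ne_zero hu
  obtain ⟨ψ, hψ⟩ := ContinuousLinearMap.exists_apply_eq_one_of_ne_zero hw
  exact isClosed_setOf_exists_smul_inv_smul φ ψ hφ hψ
end
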